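/- arXiv:2109.09108 — 4 statements merged into one kernel-verified Lean document; each statement's English description precedes it below -/
import Mathlib

section
/- Let d ∈ ℕ and let μ : ℝ → ℝ satisfy the monotonicity condition: there exist constants 0 < m ≤ M such that m(t − s) ≤ μ(t²)t − μ(s²)s ≤ M(t − s) for all t ≥ s ≥ 0. Then the vector field φ(x) := μ(‖x‖²)x on the Euclidean space ℝ^d is strongly monotone with constant m: for all x, y ∈ ℝ^d, ⟨μ(‖x‖²)x − μ(‖y‖²)y, x − y⟩ ≥ m‖x − y‖². -/
open scoped RealInnerProductSpace

/-! Write `a = ‖x‖`, `b = ‖y‖`, `c = ⟪x, y⟫`. Both sides split into a radial part and an angular part: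
`‖x - y‖² = (a - b)² + 2 (a b - c)` and
`⟪μ(a²) x - μ(b²) y, x - y⟫ = (μ(a²) a - μ(b²) b)(a - b) + (μ(a²) + μ(b²))(a b - c)`.
The radial parts compare by the monotonicity condition, and the angular parts because
`a b - c ≥ 0` (Cauchy–Schwarz) and `μ(t²) ≥ m` for `t > 0` (the condition with `s = 0`). -/

variable {E : Type*} [NormedAddCommGroup E] [InnerProductSpace ℝ E]

theorem norm_sub_sq_eq_sq_sub_norm_add (x y : E) :
    ‖x - y‖ ^ 2 = (‖x‖ - ‖y‖) ^ 2 + 2 * (‖x‖ * ‖y‖ - ⟪x, y⟫) := by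
  rw [norm_sub_sq_real]
  ring

theorem real_inner_smul_sub_smul_sub_eq (α β : ℝ) (x y : E) :
    ⟪α • x - β • y, x - y⟫ =
      (α * ‖x‖ - β * ‖y‖) * (‖x‖ - ‖y‖) + (α + β) * (‖x‖ * ‖y‖ - ⟪x, y⟫) := by
  simp only [inner_sub_left, inner_sub_right, real_inner_smul_left,
    real_inner_self_eq_norm_sq, real_inner_comm x y]
  ring

section MonotonicityCondition

variable {μ : ℝ → ℝ} {m : ℝ}
  (hμ : ∀ t s : ℝ, 0 ≤ s → s ≤ t → m * (t - s) ≤ μ (t ^ 2) * t - μ (s ^ 2) * s)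
include hμ

theorem le_apply_sq_of_pos {t : ℝ} (ht : 0 < t) : m ≤ μ (t ^ 2) := by
  have h := hμ t 0 le_rfl ht.le
  simp only [sub_zero, mul_zero] at h
  exact le_of_mul_le_mul_right h ht

theorem mul_sq_sub_le_mul_sub {a b : ℝ} (ha : 0 ≤ a) (hb : 0 ≤ b) :
    m * (a - b) ^ 2 ≤ (μ (a ^ 2) * a - μ (b ^ 2) * b) * (a - b) := by
  rcases le_total b a with hba | hab
  · have h := mul_le_mul_of_nonneg_right (hμ a b hb hba) (sub_nonneg.2 hba)
    linarith
  · have h := mul_le_mul_of_nonneg_right (hμ b a ha hab) (sub_nonneg.2 hab)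
    linarith

theorem mul_norm_mul_sub_inner_le (x y : E) :
    m * (‖x‖ * ‖y‖ - ⟪x, y⟫) ≤ μ (‖x‖ ^ 2) * (‖x‖ * ‖y‖ - ⟪x, y⟫) := by
  rcases eq_or_ne x 0 with rfl | hx
  · simp
  · exact mul_le_mul_of_nonneg_right (le_apply_sq_of_pos hμ (norm_pos_iff.2 hx))
      (sub_nonneg.2 (real_inner_le_norm x y))

end MonotonicityCondition

theorem carreau_vectorField_stronglyMonotone_general
    (d : ℕ) (μ : ℝ → ℝ) (m M : ℝ)
    (hμ : ∀ t s : ℝ, 0 ≤ s → s ≤ t →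
      m * (t - s) ≤ μ (t ^ 2) * t - μ (s ^ 2) * s ∧
        μ (t ^ 2) * t - μ (s ^ 2) * s ≤ M * (t - s)) :
    ∀ x y : EuclideanSpace ℝ (Fin d),
      m * ‖x - y‖ ^ 2 ≤ ⟪μ (‖x‖ ^ 2) • x - μ (‖y‖ ^ 2) • y, x - y⟫ := by
  intro x y
  have hlower := fun t s hs hst => (hμ t s hs hst).1
  have hradial := mul_sq_sub_le_mul_sub hlower (norm_nonneg x) (norm_nonneg y)
  have hx := mul_norm_mul_sub_inner_le hlower x y
  have hy := mul_norm_mul_sub_inner_le hlower y x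
  rw [real_inner_comm, mul_comm ‖y‖] at hy
  rw [norm_sub_sq_eq_sq_sub_norm_add, real_inner_smul_sub_smul_sub_eq]
  linarith

/-- If `μ` satisfies the monotonicity condition
`m(t−s) ≤ μ(t²)t − μ(s²)s ≤ M(t−s)` for `t ≥ s ≥ 0`, then the vector field
`x ↦ μ(‖x‖²)x` on Euclidean space is strongly monotone with constant `m`. -/
theorem carreau_vectorField_stronglyMonotone
    (d : ℕ) (μ : ℝ → ℝ) (m M : ℝ) (hm : 0 < m) (hmM : m ≤ M)
    (hμ : ∀ t s : ℝ, 0 ≤ s → s ≤ t →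
      m * (t - s) ≤ μ (t ^ 2) * t - μ (s ^ 2) * s ∧
        μ (t ^ 2) * t - μ (s ^ 2) * s ≤ M * (t - s)) :
    ∀ x y : EuclideanSpace ℝ (Fin d),
      m * ‖x - y‖ ^ 2 ≤ ⟪μ (‖x‖ ^ 2) • x - μ (‖y‖ ^ 2) • y, x - y⟫ :=
  carreau_vectorField_stronglyMonotone_general d μ m M hμ
end

section
/- Let d ∈ ℕ and let μ : ℝ → ℝ satisfy the monotonicity condition: there exist constants 0 < m ≤ M such that m(t − s) ≤ μ(t²)t − μ(s²)s ≤ M(t − s) for all t ≥ s ≥ 0. Then the vector field φ(x) := μ(‖x‖²)x on the Euclidean space ℝ^d is Lipschitz continuous with constant 3M: for all x, y ∈ ℝ^d, ‖μ(‖x‖²)x − μ(‖y‖²)y‖ ≤ 3M‖x − y‖. -/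
private lemma carreau_aux (d : ℕ) (μ : ℝ → ℝ) (m M : ℝ) (hm : 0 < m) (hmM : m ≤ M)
    (hμ : ∀ t s : ℝ, 0 ≤ s → s ≤ t →
      m * (t - s) ≤ μ (t ^ 2) * t - μ (s ^ 2) * s ∧
        μ (t ^ 2) * t - μ (s ^ 2) * s ≤ M * (t - s))
    (x y : EuclideanSpace ℝ (Fin d)) (hba : ‖y‖ ≤ ‖x‖) :
    ‖μ (‖x‖ ^ 2) • x - μ (‖y‖ ^ 2) • y‖ ≤ 3 * M * ‖x - y‖ := by
  set a := ‖x‖ with ha'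
  set b := ‖y‖ with hb'
  have hb0 : 0 ≤ b := norm_nonneg y
  have ha0 : 0 ≤ a := norm_nonneg x
  have hM : 0 < M := lt_of_lt_of_le hm hmM
  rcases eq_or_lt_of_le ha0 with h0 | hapos
  · have hx : x = 0 := norm_eq_zero.mp h0.symm
    have hy : y = 0 := norm_eq_zero.mp (le_antisymm (h0 ▸ hba) hb0)
    simp [hx, hy]
  · obtain ⟨ha1, ha2⟩ := hμ a 0 le_rfl hapos.le
    have hμa_le : μ (a ^ 2) ≤ M := by nlinarith
    have hμa_ge : m ≤ μ (a ^ 2) := by nlinarith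
    obtain ⟨h1, h2⟩ := hμ a b hb0 hba
    have key : |μ (a ^ 2) - μ (b ^ 2)| * b ≤ M * (a - b) := by
      rw [show |μ (a ^ 2) - μ (b ^ 2)| * b = |(μ (a ^ 2) - μ (b ^ 2)) * b| by
        rw [abs_mul, abs_of_nonneg hb0], abs_le]
      constructor <;> nlinarith
    have decomp : μ (a ^ 2) • x - μ (b ^ 2) • y
        = μ (a ^ 2) • (x - y) + (μ (a ^ 2) - μ (b ^ 2)) • y := by
      rw [smul_sub, sub_smul]; abel
    have hsub : a - b ≤ ‖x - y‖ := by
      have := norm_sub_norm_le x y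
      linarith [this]
    calc ‖μ (a ^ 2) • x - μ (b ^ 2) • y‖
        ≤ ‖μ (a ^ 2) • (x - y)‖ + ‖(μ (a ^ 2) - μ (b ^ 2)) • y‖ := by
          rw [decomp]; exact norm_add_le _ _
      _ = |μ (a ^ 2)| * ‖x - y‖ + |μ (a ^ 2) - μ (b ^ 2)| * b := by
          rw [norm_smul, norm_smul, Real.norm_eq_abs, Real.norm_eq_abs]
      _ ≤ M * ‖x - y‖ + M * (a - b) := by
          have h3 : |μ (a ^ 2)| = μ (a ^ 2) := abs_of_pos (lt_of_lt_of_le hm hμa_ge)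
          rw [h3]
          have := norm_nonneg (x - y)
          nlinarith
      _ ≤ 3 * M * ‖x - y‖ := by nlinarith
  
/-- If `μ` satisfies the monotonicity condition
`m(t−s) ≤ μ(t²)t − μ(s²)s ≤ M(t−s)` for `t ≥ s ≥ 0`, then the vector field
`x ↦ μ(‖x‖²)x` on Euclidean space is Lipschitz continuous with constant `3M`. -/
theorem carreau_vectorField_lipschitz
    (d : ℕ) (μ : ℝ → ℝ) (m M : ℝ) (hm : 0 < m) (hmM : m ≤ M)
    (hμ : ∀ t s : ℝ, 0 ≤ s → s ≤ t →
      m * (t - s) ≤ μ (t ^ 2) * t - μ (s ^ 2) * s ∧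
        μ (t ^ 2) * t - μ (s ^ 2) * s ≤ M * (t - s)) :
    ∀ x y : EuclideanSpace ℝ (Fin d),
      ‖μ (‖x‖ ^ 2) • x - μ (‖y‖ ^ 2) • y‖ ≤ 3 * M * ‖x - y‖ := by
  intro x y
  rcases le_total ‖y‖ ‖x‖ with h | h
  · exact carreau_aux d μ m M hm hmM hμ x y h
  · rw [show μ (‖x‖ ^ 2) • x - μ (‖y‖ ^ 2) • y
        = -(μ (‖y‖ ^ 2) • y - μ (‖x‖ ^ 2) • x) by abel, norm_neg,
      show x - y = -(y - x) by abel, norm_neg]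
    exact carreau_aux d μ m M hm hmM hμ y x h
end

section
/- Let d ∈ ℕ, let μ : ℝ → ℝ be continuous and satisfy the monotonicity condition: there exist constants 0 < m ≤ M such that m(t − s) ≤ μ(t²)t − μ(s²)s ≤ M(t − s) for all t ≥ s ≥ 0, and define ψ(s) := (1/2)∫₀^s μ(τ) dτ. Then the function x ↦ ψ(‖x‖²) is strictly convex on the Euclidean space ℝ^d. -/
/-!
Write `g t = ψ (t²)`, so that the potential is `x ↦ g ‖x‖` and `g' t = μ(t²) t`. The lower
monotonicity bound makes `g'` strictly increasing on `[0, ∞)` with `g' 0 = 0`, so `g` is strictly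
convex and strictly increasing there. Composing with the norm of a strictly convex space keeps
strict convexity: for `‖x‖ ≠ ‖y‖` strictness comes from `g`, and for `‖x‖ = ‖y‖`, `x ≠ y` it
comes from the strict triangle inequality.
-/

open Set

theorem StrictMonoOn.strictConvexOn_of_hasDerivAt {D : Set ℝ} (hD : Convex ℝ D) {f f' : ℝ → ℝ}
    (hf : ∀ x, HasDerivAt f (f' x) x) (hf' : StrictMonoOn f' D) : StrictConvexOn ℝ D f := by
  have hderiv : deriv f = f' := funext fun x => (hf x).deriv
  refine StrictMonoOn.strictConvexOn_of_deriv hD ?_ ?_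
  · exact fun x _ => (hf x).continuousAt.continuousWithinAt
  · exact hderiv ▸ hf'.mono interior_subset

theorem StrictMonoOn.strictMonoOn_Ici_of_hasDerivAt {a : ℝ} {f f' : ℝ → ℝ}
    (hf : ∀ x, HasDerivAt f (f' x) x) (hf' : StrictMonoOn f' (Ici a)) (ha : 0 ≤ f' a) :
    StrictMonoOn f (Ici a) := by
  refine strictMonoOn_of_deriv_pos (convex_Ici a)
    (fun x _ => (hf x).continuousAt.continuousWithinAt) fun x hx => ?_
  rw [interior_Ici] at hx
  rw [(hf x).deriv]
  exact ha.trans_lt (hf' self_mem_Ici (mem_Ici.2 (le_of_lt hx)) hx)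

theorem StrictConvexOn.comp_norm {E : Type*} [NormedAddCommGroup E] [NormedSpace ℝ E]
    [StrictConvexSpace ℝ E] {g : ℝ → ℝ} (hg : StrictConvexOn ℝ (Ici 0) g)
    (hg' : StrictMonoOn g (Ici 0)) : StrictConvexOn ℝ univ fun x : E => g ‖x‖ := by
  refine ⟨convex_univ, fun x _ y _ hxy a b ha hb hab => ?_⟩
  have hcombo : a * ‖x‖ + b * ‖y‖ ∈ Ici (0 : ℝ) := mem_Ici.2 (by positivity)
  have hconv : g (a * ‖x‖ + b * ‖y‖) ≤ a • g ‖x‖ + b • g ‖y‖ :=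
    hg.convexOn.2 (norm_nonneg x) (norm_nonneg y) ha.le hb.le hab
  rcases eq_or_ne ‖x‖ ‖y‖ with hnorm | hnorm
  · have hlt : ‖a • x + b • y‖ < a * ‖x‖ + b * ‖y‖ := by
      rw [← hnorm, ← add_mul, hab, one_mul]
      exact norm_combo_lt_of_ne le_rfl hnorm.ge hxy ha hb hab
    exact (hg' (norm_nonneg _) hcombo hlt).trans_le hconv
  · have hle : ‖a • x + b • y‖ ≤ a * ‖x‖ + b * ‖y‖ := by
      simpa [norm_smul, abs_of_pos ha, abs_of_pos hb] using norm_add_le (a • x) (b • y)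
    calc g ‖a • x + b • y‖ ≤ g (a * ‖x‖ + b * ‖y‖) := hg'.monotoneOn (norm_nonneg _) hcombo hle
      _ < a • g ‖x‖ + b • g ‖y‖ := hg.2 (norm_nonneg x) (norm_nonneg y) hnorm ha hb hab

theorem hasDerivAt_half_integral_sq {μ : ℝ → ℝ} (hμ : Continuous μ) (t : ℝ) :
    HasDerivAt (fun t => 1 / 2 * ∫ τ in (0 : ℝ)..t ^ 2, μ τ) (μ (t ^ 2) * t) t := by
  have hint : HasDerivAt (fun u => ∫ τ in (0 : ℝ)..u, μ τ) (μ (t ^ 2)) (t ^ 2) :=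
    intervalIntegral.integral_hasDerivAt_right (hμ.intervalIntegrable _ _)
      (hμ.stronglyMeasurableAtFilter _ _) hμ.continuousAt
  have hsq : HasDerivAt (fun u : ℝ => u ^ 2) (2 * t) t := by simpa using hasDerivAt_pow 2 t
  exact ((hint.comp (h := fun u : ℝ => u ^ 2) t hsq).const_mul (1 / 2 : ℝ)).congr_deriv (by ring)

theorem carreau_potential_strictConvex_general
    (d : ℕ) (μ : ℝ → ℝ) (hcont : Continuous μ) (m M : ℝ) (hm : 0 < m)
    (hμ : ∀ t s : ℝ, 0 ≤ s → s ≤ t →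
      m * (t - s) ≤ μ (t ^ 2) * t - μ (s ^ 2) * s ∧
        μ (t ^ 2) * t - μ (s ^ 2) * s ≤ M * (t - s))
    (ψ : ℝ → ℝ) (hψ : ∀ s : ℝ, ψ s = (1 / 2) * ∫ τ in (0 : ℝ)..s, μ τ) :
    StrictConvexOn ℝ Set.univ
      (fun x : EuclideanSpace ℝ (Fin d) => ψ (‖x‖ ^ 2)) := by
  have hderiv : ∀ t, HasDerivAt (fun t => ψ (t ^ 2)) (μ (t ^ 2) * t) t := by
    simpa only [hψ] using hasDerivAt_half_integral_sq hcont
  have hderiv_mono : StrictMonoOn (fun t => μ (t ^ 2) * t) (Ici 0) := fun s hs t _ hst => by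
    nlinarith [(hμ t s hs hst.le).1]
  exact (hderiv_mono.strictConvexOn_of_hasDerivAt (convex_Ici 0) hderiv).comp_norm
    (hderiv_mono.strictMonoOn_Ici_of_hasDerivAt hderiv (by simp))

/-- If continuous `μ` satisfies the monotonicity condition
`m(t−s) ≤ μ(t²)t − μ(s²)s ≤ M(t−s)` for `t ≥ s ≥ 0` and
`ψ(s) = (1/2)∫₀^s μ(τ) dτ`, then `x ↦ ψ(‖x‖²)` is strictly convex on
Euclidean space. -/
theorem carreau_potential_strictConvex
    (d : ℕ) (μ : ℝ → ℝ) (hcont : Continuous μ) (m M : ℝ) (hm : 0 < m)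
    (hmM : m ≤ M)
    (hμ : ∀ t s : ℝ, 0 ≤ s → s ≤ t →
      m * (t - s) ≤ μ (t ^ 2) * t - μ (s ^ 2) * s ∧
        μ (t ^ 2) * t - μ (s ^ 2) * s ≤ M * (t - s))
    (ψ : ℝ → ℝ) (hψ : ∀ s : ℝ, ψ s = (1 / 2) * ∫ τ in (0 : ℝ)..s, μ τ) :
    StrictConvexOn ℝ Set.univ
      (fun x : EuclideanSpace ℝ (Fin d) => ψ (‖x‖ ^ 2)) :=
  carreau_potential_strictConvex_general d μ hcont m M hm hμ ψ hψ
end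

section
/- Let μ∞, μ₀, λ, r ∈ ℝ with μ₀ > μ∞ > 0, λ > 0, and 1 < r < 2, and define the Carreau-law diffusion coefficient μ(t) := μ∞ + (μ₀ − μ∞)(1 + λt)^{(r−2)/2} for t ≥ 0. Then μ satisfies the monotonicity condition with constants m = μ∞ and M = μ₀: for all t ≥ s ≥ 0, μ∞(t − s) ≤ μ(t²)t − μ(s²)s ≤ μ₀(t − s). -/
/-- The Carreau-law diffusion coefficient
`μ(t) = μ∞ + (μ₀ − μ∞)(1 + λt)^{(r−2)/2}` with `μ₀ > μ∞ > 0`, `λ > 0`,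
`1 < r < 2`, satisfies the monotonicity condition with constants `m = μ∞`
and `M = μ₀`: for all `t ≥ s ≥ 0`,
`μ∞(t − s) ≤ μ(t²)t − μ(s²)s ≤ μ₀(t − s)`. -/
theorem carreau_law_monotonicity
    (μinf μ0 lam r : ℝ) (h1 : 0 < μinf) (h2 : μinf < μ0) (hlam : 0 < lam)
    (hr1 : 1 < r) (hr2 : r < 2)
    (μ : ℝ → ℝ)
    (hμ : ∀ t : ℝ, 0 ≤ t →
      μ t = μinf + (μ0 - μinf) * (1 + lam * t) ^ ((r - 2) / 2)) :
    ∀ t s : ℝ, 0 ≤ s → s ≤ t →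
      μinf * (t - s) ≤ μ (t ^ 2) * t - μ (s ^ 2) * s ∧
        μ (t ^ 2) * t - μ (s ^ 2) * s ≤ μ0 * (t - s) := by
  intro t s hs hst
  have ht : 0 ≤ t := hs.trans hst
  set α : ℝ := (r - 2) / 2 with hα
  set β : ℝ := -α with hβ
  have hαneg : α < 0 := by rw [hα]; linarith
  have hβpos : 0 < β := by rw [hβ]; linarith
  have hβhalf : β < 1/2 := by rw [hβ, hα]; linarith
  set u : ℝ := 1 + lam * t ^ 2 with hu
  set v : ℝ := 1 + lam * s ^ 2 with hv
  have hv1 : (1:ℝ) ≤ v := by nlinarith [sq_nonneg s]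
  have hu1 : (1:ℝ) ≤ u := by nlinarith [sq_nonneg t]
  have hv0 : (0:ℝ) < v := by linarith
  have hu0 : (0:ℝ) < u := by linarith
  have hsq : s ^ 2 ≤ t ^ 2 := by nlinarith
  have huv : v ≤ u := by nlinarith
  -- identity : x * w ^ α = x ^ (1 - 2β) * (x^2 / w) ^ β for x ≥ 0, w > 0, x > 0
  have hid : ∀ x w : ℝ, 0 < x → 0 < w →
      x * w ^ α = x ^ ((1:ℝ) - 2*β) * (x ^ 2 / w) ^ β := by
    intro x w hx hw
    rw [Real.div_rpow (by positivity) hw.le,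
      ← Real.rpow_natCast x 2, ← Real.rpow_mul hx.le]
    push_cast
    rw [show w ^ α = (w ^ β)⁻¹ by
        rw [hβ, Real.rpow_neg hw.le]; simp,
      ← mul_div_assoc, ← Real.rpow_add hx]
    rw [show (1:ℝ) - 2*β + 2*β = 1 by ring, Real.rpow_one]
    rw [div_eq_mul_inv]
  -- key1 : s * v ^ α ≤ t * u ^ α
  have key1 : s * v ^ α ≤ t * u ^ α := by
    rcases eq_or_lt_of_le hs with hs0 | hs0
    · rw [← hs0]; simp; positivity
    have ht0 : 0 < t := lt_of_lt_of_le hs0 hst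
    rw [hid s v hs0 hv0, hid t u ht0 hu0]
    have e1 : s ^ ((1:ℝ) - 2*β) ≤ t ^ ((1:ℝ) - 2*β) :=
      Real.rpow_le_rpow hs hst (by linarith)
    have e2 : (s ^ 2 / v) ^ β ≤ (t ^ 2 / u) ^ β := by
      apply Real.rpow_le_rpow (by positivity) _ hβpos.le
      rw [div_le_div_iff₀ hv0 hu0]
      nlinarith
    exact mul_le_mul e1 e2 (by positivity) (by positivity)
  -- key2 : t * u ^ α - s * v ^ α ≤ t - s
  have huva : u ^ α ≤ v ^ α := Real.rpow_le_rpow_of_nonpos hv0 huv hαneg.le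
  have hv1a : v ^ α ≤ 1 := Real.rpow_le_one_of_one_le_of_nonpos hv1 hαneg.le
  have key2 : t * u ^ α - s * v ^ α ≤ t - s := by
    have : s * (1 - v ^ α) ≤ t * (1 - u ^ α) :=
      mul_le_mul hst (by linarith) (by linarith) ht
    nlinarith
  rw [hμ (t ^ 2) (by positivity), hμ (s ^ 2) (by positivity)]
  have hd : (0:ℝ) < μ0 - μinf := by linarith
  constructor
  · nlinarith [mul_le_mul_of_nonneg_left key1 hd.le]
  · nlinarith [mul_le_mul_of_nonneg_left key2 hd.le]
end
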